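/- For fixed m ≥ 2, the sequence f(m, n) = n! / ((n/m)!)^m · (1/m^n) is strictly decreasing in n along multiples of m; that is, f(m, n+m) < f(m, n) for all positive multiples n of m. -/

import Mathlib

/-- `f m n = n! / ((n/m)!)^m · (1/m^n)`. -/
noncomputable def fProb (m n : ℕ) : ℝ :=
  (Nat.factorial n : ℝ) / ((Nat.factorial (n / m) : ℝ) ^ m) * (1 / (m : ℝ) ^ n)

/-!
Writing `n = m k`, passing from `n` to `n + m` multiplies `n!` by `(mk+1)(mk+2)⋯(mk+m)` and
`((n/m)!)^m m^n` by `(k+1)^m m^m = (mk+m)^m`. So `f(m, n+m) / f(m, n)` is a product of `m` factors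
`(mk+i)/(mk+m)`, `1 ≤ i ≤ m`, none above `1` and the first below `1` once `m ≥ 2`.
-/

open Nat

lemma fProb_pos (m n : ℕ) (hm : 0 < m) : 0 < fProb m n := by
  unfold fProb
  positivity

lemma fProb_mul_add_self (m k : ℕ) (hm : 0 < m) :
    fProb m (m * k + m) =
      fProb m (m * k) * ((m * k + 1).ascFactorial m / ((m * k + m : ℕ) : ℝ) ^ m) := by
  have hk : m * k / m = k := Nat.mul_div_cancel_left k hm
  have hk1 : (m * k + m) / m = k + 1 := by
    rw [← Nat.mul_succ, Nat.mul_div_cancel_left _ hm]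
  have hfact : ((m * k + m)! : ℝ) = (m * k)! * (m * k + 1).ascFactorial m := by
    exact_mod_cast (factorial_mul_ascFactorial (m * k) m).symm
  unfold fProb
  rw [hk, hk1, hfact, factorial_succ]
  push_cast
  rw [show (m * k + m : ℝ) = m * (k + 1) by ring, mul_pow, pow_add, mul_pow]
  field_simp

theorem fProb_strict_decreasing_general (m n : ℕ) (hm : 2 ≤ m) (hd : m ∣ n) :
    fProb m (n + m) < fProb m n := by
  obtain ⟨k, rfl⟩ := hd
  have hm0 : 0 < m := by omega
  have hratio : ((m * k + 1).ascFactorial m : ℝ) / ((m * k + m : ℕ) : ℝ) ^ m < 1 := by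
    rw [div_lt_one (by positivity)]
    exact_mod_cast ascFactorial_lt_pow_add (m * k) hm
  rw [fProb_mul_add_self m k hm0]
  exact mul_lt_of_lt_one_right (fProb_pos m (m * k) hm0) hratio

/-- For fixed `m ≥ 2`, `f(m, ·)` is strictly decreasing along positive multiples of `m`:
`f(m, n + m) < f(m, n)` whenever `n` is a positive multiple of `m`. -/
theorem fProb_strict_decreasing (m n : ℕ) (hm : 2 ≤ m) (hn : 0 < n) (hd : m ∣ n) :
    fProb m (n + m) < fProb m n :=
  fProb_strict_decreasing_general m n hm hd
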